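/- arXiv:1607.07247 — 4 statements merged into one kernel-verified Lean document; each statement's English description precedes it below -/
import Mathlib

section
/- For all real numbers $w_1, w_2$ with $0 < 2w_2 < w_1$ and every $q \in [0, 1/2]$, the inequality $2w_2 - (w_1 + w_2)\, h\!\left(\frac{w_2}{w_1 + w_2}\right) + q\, w_1 < q\,(w_1 - w_2)$ holds. -/
/-!
For `p = w₂ / (w₁ + w₂)` the claim reads `(2 + q) p < h p`, where `p < 1/3` because `2 w₂ < w₁`.
By concavity, `h` lies above its chord from `0` to `1/3`, so `h p ≥ 3 p h(1/3) = p (3 log₂ 3 - 2)`,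
and `3 log₂ 3 - 2 > 5/2 ≥ 2 + q` amounts to `3² > 2³`.
-/

/-- The binary entropy function in bits: `h x = -x log₂ x - (1-x) log₂ (1-x)`.
Since `Real.logb 2 0 = 0` in Mathlib, this satisfies `h 0 = h 1 = 0`. -/
noncomputable def binEntropy2 (x : ℝ) : ℝ :=
  -x * Real.logb 2 x - (1 - x) * Real.logb 2 (1 - x)

open Real

lemma ConcaveOn.smul_le_map_smul {E : Type*} [AddCommGroup E] [Module ℝ E] {s : Set E}
    {f : E → ℝ} (hf : ConcaveOn ℝ s f) (h0 : 0 ∈ s) (hf0 : f 0 = 0) {x : E} (hx : x ∈ s)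
    {t : ℝ} (ht₀ : 0 ≤ t) (ht₁ : t ≤ 1) : t • f x ≤ f (t • x) := by
  simpa [hf0] using hf.2 hx h0 ht₀ (sub_nonneg.2 ht₁) (add_sub_cancel t 1)

lemma binEntropy2_eq_binEntropy_div_log_two (x : ℝ) :
    binEntropy2 x = binEntropy x / log 2 := by
  simp only [binEntropy2, binEntropy, logb, log_inv]
  ring

lemma binEntropy_inv_three : binEntropy 3⁻¹ = log 3 - 2 / 3 * log 2 := by
  have h : (1 : ℝ) - 3⁻¹ = 2 * 3⁻¹ := by norm_num
  rw [binEntropy, h, inv_inv, mul_inv, inv_inv, log_mul (by norm_num) (by norm_num), log_inv]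
  ring

lemma three_mul_log_two_lt_two_mul_log_three : 3 * log 2 < 2 * log 3 := by
  have h := log_lt_log (by norm_num) (by norm_num : (2 : ℝ) ^ 3 < 3 ^ 2)
  rwa [log_pow, log_pow, Nat.cast_ofNat, Nat.cast_ofNat] at h

lemma five_halves_mul_log_two_mul_lt_binEntropy {p : ℝ} (hp₀ : 0 < p) (hp : p ≤ 1 / 3) :
    5 / 2 * log 2 * p < binEntropy p := by
  have hchord : (3 * p) * binEntropy 3⁻¹ ≤ binEntropy p := by
    have := strictConcave_binEntropy.concaveOn.smul_le_map_smul (x := 3⁻¹) (t := 3 * p)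
      (by simp) binEntropy_zero (by norm_num) (by positivity) (by linarith)
    simpa [smul_eq_mul, mul_comm (3 : ℝ), mul_assoc] using this
  rw [binEntropy_inv_three] at hchord
  nlinarith [three_mul_log_two_lt_two_mul_log_three]

lemma five_halves_mul_lt_binEntropy2 {p : ℝ} (hp₀ : 0 < p) (hp : p ≤ 1 / 3) :
    5 / 2 * p < binEntropy2 p := by
  rw [binEntropy2_eq_binEntropy_div_log_two, lt_div_iff₀ (log_pos one_lt_two)]
  linarith [five_halves_mul_log_two_mul_lt_binEntropy hp₀ hp]

theorem stmt_0_general (w₁ w₂ q : ℝ) (hw₂ : 0 < w₂) (hw : 2 * w₂ < w₁)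
    (hq : q ≤ 1 / 2) :
    2 * w₂ - (w₁ + w₂) * binEntropy2 (w₂ / (w₁ + w₂)) + q * w₁ < q * (w₁ - w₂) := by
  have hs : 0 < w₁ + w₂ := by linarith
  set p := w₂ / (w₁ + w₂) with hp
  have hp₀ : 0 < p := div_pos hw₂ hs
  have hp₃ : p ≤ 1 / 3 := by rw [hp, div_le_iff₀ hs]; linarith
  have hw₂_eq : w₂ = (w₁ + w₂) * p := by rw [hp, mul_div_cancel₀ _ hs.ne']
  have hentropy := mul_lt_mul_of_pos_left (five_halves_mul_lt_binEntropy2 hp₀ hp₃) hs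
  have hq_w₂ : q * w₂ ≤ 1 / 2 * w₂ := mul_le_mul_of_nonneg_right hq hw₂.le
  linarith

theorem stmt_0 (w₁ w₂ q : ℝ) (hw₂ : 0 < w₂) (hw : 2 * w₂ < w₁)
    (hq0 : 0 ≤ q) (hq : q ≤ 1 / 2) :
    2 * w₂ - (w₁ + w₂) * binEntropy2 (w₂ / (w₁ + w₂)) + q * w₁ < q * (w₁ - w₂) :=
  stmt_0_general w₁ w₂ q hw₂ hw hq
end

section
/- For every real number $x$ with $\frac{1}{2} \le x < 1$, one has $f(x) < 2 - x - h(x)$; that is, the worst-case redundancy of optimal binary AIFV codes is strictly smaller than the worst-case redundancy $2 - p_{\max} - h(p_{\max})$ of Huffman codes for every $p_{\max} = x \ge \frac{1}{2}$. -/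
/-- The piecewise worst-case redundancy function of optimal binary AIFV codes:
`f x = x² - 2x + 2 - h x` for `x ≤ (-1+√5)/2` and
`f x = (-2x² + x + 2)/(1+x) - h x` otherwise. -/
noncomputable def aifvF (x : ℝ) : ℝ :=
  if x ≤ (-1 + Real.sqrt 5) / 2 then
    x ^ 2 - 2 * x + 2 - binEntropy2 x
  else
    (-2 * x ^ 2 + x + 2) / (1 + x) - binEntropy2 x

/-! The entropy term is common to both sides, so only the rational parts of `aifvF` need
comparing with `2 - x`: they fall short of it by `x - x²` and `x² / (1 + x)` respectively. -/

lemma sq_sub_two_mul_add_two_lt {x : ℝ} (hx₀ : 0 < x) (hx₁ : x < 1) :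
    x ^ 2 - 2 * x + 2 < 2 - x := by
  nlinarith

lemma neg_two_mul_sq_add_add_two_div_lt {x : ℝ} (hx : 0 < x) :
    (-2 * x ^ 2 + x + 2) / (1 + x) < 2 - x := by
  rw [div_lt_iff₀ (by linarith)]
  nlinarith

theorem stmt_8 (x : ℝ) (h₁ : 1 / 2 ≤ x) (h₂ : x < 1) :
    aifvF x < 2 - x - binEntropy2 x := by
  have hx₀ : 0 < x := by linarith
  unfold aifvF
  split_ifs
  · linarith [sq_sub_two_mul_add_two_lt hx₀ h₂]
  · linarith [neg_two_mul_sq_add_add_two_div_lt hx₀]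
end

section
/- For every real number $x$ with $\frac{1}{2} \le x < 1$, one has $\min\{ f(x),\, f_3(x) \} < \frac{1}{3}$. -/
/-- The redundancy upper bound `f₃` for binary AIFV-3 codes. -/
noncomputable def aifvF3 (x : ℝ) : ℝ :=
  2 - x - binEntropy2 x
    + (1 + x) / (1 + x + x ^ 2) * (-x + 2 * (1 - x))
    + x ^ 2 / (1 + x + x ^ 2) * (1 - x)

/-- The redundancy upper bound `f₄` for binary AIFV-4 codes. -/
noncomputable def aifvF4 (x : ℝ) : ℝ :=
  2 - x - binEntropy2 x
    + (1 + x) / (1 + x + x ^ 2 + x ^ 3) * (-x + 3 * (1 - x))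
    + x ^ 2 / (1 + x + x ^ 2 + x ^ 3) * (-x + 2 * (1 - x))
    + x ^ 3 / (1 + x + x ^ 2 + x ^ 3) * (1 - x)

open Real

/-!
With `H` the natural-log binary entropy, `h = H / log 2`, so each bound `g x - h x < 1/3` reads
`(g x - 1/3) log 2 < H x`. For `x ≤ 7/8` use `f`: the Padé bound `log y ≤ 2(y-1)/(y+1)` at `y = x`
and `y = 1 - x` gives `H x ≥ 6x(1-x)/((1+x)(2-x))`, and on either branch of `f` (the golden-ratio
breakpoint lies in `[3/5, 2/3]`) what remains is a polynomial inequality once `log 2 < 7/10`.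
For `x ≥ 7/8` use `f₃`: there the cruder `-x log x ≥ x(1-x)` and `-log (1-x) ≥ 3 log 2` suffice.
-/

lemma log_le_two_mul_sub_one_div_add_one {y : ℝ} (h0 : 0 < y) (h1 : y ≤ 1) :
    log y ≤ 2 * (y - 1) / (y + 1) := by
  set t := (1 - y) / (1 + y) with ht
  have ht0 : 0 ≤ t := div_nonneg (by linarith) (by linarith)
  have ht1 : t < 1 := (div_lt_one (by linarith)).2 (by linarith)
  have hinv : (1 + t) / (1 - t) = y⁻¹ := by
    have : 1 + y ≠ 0 := by linarith
    rw [ht, one_sub_div this, one_add_div this, div_div_div_cancel_right₀ this]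
    ring
  have key := sum_range_le_log_div ht0 ht1 1
  rw [hinv, log_inv, Finset.sum_range_one] at key
  have : 2 * (y - 1) / (y + 1) = -2 * t := by rw [ht]; field_simp; ring
  norm_num at key
  linarith

lemma six_mul_div_le_binEntropy {x : ℝ} (h0 : 0 < x) (h1 : x < 1) :
    6 * x * (1 - x) / ((1 + x) * (2 - x)) ≤ binEntropy x := by
  have hx := log_le_two_mul_sub_one_div_add_one h0 h1.le
  have hx' := log_le_two_mul_sub_one_div_add_one (sub_pos.2 h1) (by linarith)
  have e : 6 * x * (1 - x) / ((1 + x) * (2 - x))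
      = -(x * (2 * (x - 1) / (x + 1))) - (1 - x) * (2 * (1 - x - 1) / (1 - x + 1)) := by
    have : 2 - x ≠ 0 := by linarith
    have : 1 - x + 1 ≠ 0 := by linarith
    field_simp; ring
  rw [e, binEntropy_eq_negMulLog_add_negMulLog_one_sub, negMulLog, negMulLog]
  nlinarith [mul_le_mul_of_nonneg_left hx h0.le, mul_le_mul_of_nonneg_left hx' (sub_pos.2 h1).le]

lemma mul_one_sub_sub_mul_log_le_binEntropy {x : ℝ} (h0 : 0 < x) :
    x * (1 - x) - (1 - x) * log (1 - x) ≤ binEntropy x := by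
  rw [binEntropy_eq_negMulLog_add_negMulLog_one_sub, negMulLog, negMulLog]
  nlinarith [mul_le_mul_of_nonneg_left (log_le_sub_one_of_pos h0) h0.le]

lemma sub_binEntropy2_lt_iff {a b x : ℝ} :
    a - binEntropy2 x < b ↔ (a - b) * log 2 < binEntropy x := by
  rw [sub_lt_comm, binEntropy2_eq_binEntropy_div_log_two, lt_div_iff₀ (log_pos one_lt_two)]

lemma log_two_lt_seven_tenths : log 2 < 7 / 10 := log_two_lt_d9.trans (by norm_num)

lemma quadratic_sub_binEntropy2_lt_one_third {x : ℝ} (h₁ : 1 / 2 ≤ x) (h₂ : x ≤ 2 / 3) :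
    x ^ 2 - 2 * x + 2 - binEntropy2 x < 1 / 3 := by
  rw [sub_binEntropy2_lt_iff]
  refine lt_of_lt_of_le ?_ (six_mul_div_le_binEntropy (by linarith) (by linarith))
  have hD : 0 < (1 + x) * (2 - x) := by nlinarith
  have hq : 0 < (x ^ 2 - 2 * x + 2 - 1 / 3) * ((1 + x) * (2 - x)) := by nlinarith
  rw [lt_div_iff₀ hD]
  calc (x ^ 2 - 2 * x + 2 - 1 / 3) * log 2 * ((1 + x) * (2 - x))
      = log 2 * ((x ^ 2 - 2 * x + 2 - 1 / 3) * ((1 + x) * (2 - x))) := by ring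
    _ < 7 / 10 * ((x ^ 2 - 2 * x + 2 - 1 / 3) * ((1 + x) * (2 - x))) := by
      gcongr; exact log_two_lt_seven_tenths
    _ ≤ 6 * x * (1 - x) := by nlinarith [mul_nonneg (sub_nonneg.2 h₁) (sub_nonneg.2 h₂)]

lemma rational_sub_binEntropy2_lt_one_third {x : ℝ} (h₁ : 3 / 5 ≤ x) (h₂ : x ≤ 7 / 8) :
    (-2 * x ^ 2 + x + 2) / (1 + x) - binEntropy2 x < 1 / 3 := by
  rw [sub_binEntropy2_lt_iff]
  refine lt_of_lt_of_le ?_ (six_mul_div_le_binEntropy (by linarith) (by linarith))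
  have hD : 0 < (1 + x) * (2 - x) := by nlinarith
  have e : (-2 * x ^ 2 + x + 2) / (1 + x) - 1 / 3 = (-6 * x ^ 2 + 2 * x + 5) / (3 * (1 + x)) := by
    field_simp; ring
  have hq : 0 < -6 * x ^ 2 + 2 * x + 5 := by nlinarith
  rw [e, div_mul_eq_mul_div, div_lt_div_iff₀ (by linarith) hD]
  calc (-6 * x ^ 2 + 2 * x + 5) * log 2 * ((1 + x) * (2 - x))
      = log 2 * ((-6 * x ^ 2 + 2 * x + 5) * ((1 + x) * (2 - x))) := by ring
    _ < 7 / 10 * ((-6 * x ^ 2 + 2 * x + 5) * ((1 + x) * (2 - x))) := by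
      gcongr; exact log_two_lt_seven_tenths
    _ ≤ 6 * x * (1 - x) * (3 * (1 + x)) := by
      nlinarith [mul_nonneg (sub_nonneg.2 h₁) (sub_nonneg.2 h₂)]

lemma aifvF3_lt_one_third {x : ℝ} (h₁ : 7 / 8 ≤ x) (h₂ : x < 1) : aifvF3 x < 1 / 3 := by
  have hD : 0 < 1 + x + x ^ 2 := by nlinarith
  have e : aifvF3 x
      = 1 / 3 + (1 - x) * (6 * x ^ 2 + 10 * x + 11) / (3 * (1 + x + x ^ 2)) - binEntropy2 x := by
    unfold aifvF3; field_simp; ring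
  have hlog : log (1 - x) ≤ -(3 * log 2) := by
    calc log (1 - x) ≤ log ((2 ^ 3)⁻¹) := log_le_log (by linarith) (by linarith)
      _ = -(3 * log 2) := by rw [log_inv, log_pow]; norm_num
  rw [e, sub_binEntropy2_lt_iff]
  calc (1 / 3 + (1 - x) * (6 * x ^ 2 + 10 * x + 11) / (3 * (1 + x + x ^ 2)) - 1 / 3) * log 2
      = (1 - x) * ((6 * x ^ 2 + 10 * x + 11) * log 2 / (3 * (1 + x + x ^ 2))) := by ring
    _ < (1 - x) * (x + 3 * log 2) := by
      gcongr
      rw [div_lt_iff₀ (by positivity)]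
      have hA : 0 ≤ (1 - x) * (3 * x + 2) := by nlinarith
      nlinarith [mul_le_mul_of_nonneg_right log_two_lt_seven_tenths.le hA]
    _ ≤ x * (1 - x) - (1 - x) * log (1 - x) := by nlinarith
    _ ≤ binEntropy x := mul_one_sub_sub_mul_log_le_binEntropy (by linarith)

lemma aifvF_lt_one_third {x : ℝ} (h₁ : 1 / 2 ≤ x) (h₂ : x ≤ 7 / 8) : aifvF x < 1 / 3 := by
  have h5l : 11 / 5 < √5 := lt_sqrt_of_sq_lt (by norm_num)
  have h5u : √5 < 7 / 3 := (sqrt_lt' (by norm_num)).2 (by norm_num)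
  unfold aifvF
  split_ifs with hx
  · exact quadratic_sub_binEntropy2_lt_one_third h₁ (by linarith)
  · exact rational_sub_binEntropy2_lt_one_third (by linarith) h₂

theorem stmt_9 (x : ℝ) (h₁ : 1 / 2 ≤ x) (h₂ : x < 1) :
    min (aifvF x) (aifvF3 x) < 1 / 3 := by
  rcases le_or_gt x (7 / 8) with hx | hx
  · exact min_lt_iff.2 (Or.inl (aifvF_lt_one_third h₁ hx))
  · exact min_lt_iff.2 (Or.inr (aifvF3_lt_one_third hx.le h₂))
end

section
/- Let $s \ge 1$ be a natural number, let $\delta \in [0, 1)$, and let $a_1, \dots, a_s$ be non-negative real numbers satisfying the cyclic inequalities $a_{n+1} \ge (1-\delta)\, a_n$ for $1 \le n \le s-1$ and $a_1 \ge (1-\delta)\, a_s$. Then for every index $n \in \{1, \dots, s\}$, $a_n \ge \dfrac{\sum_{j=1}^{s} a_j}{\sum_{k=1}^{s} (1-\delta)^{k-s}}$. -/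
/-!
Put `c = 1 - δ > 0`. Following the chain of inequalities around the loop, `s - 1 - k` steps
lead from `a ((n + k + 1) % s)` to `a n`, so `a ((n + k + 1) % s) ≤ c ^ (k + 1 - s) * a n`.
Summing over `k < s`, i.e. over one full turn of the loop, bounds `∑ a j` by the denominator
times `a n`.
-/

open Finset

theorem Finset.sum_range_add_mod {M : Type*} [AddCommMonoid M] (s m : ℕ) (f : ℕ → M) :
    ∑ k ∈ range s, f ((k + m) % s) = ∑ k ∈ range s, f k := by
  rcases Nat.eq_zero_or_pos s with rfl | hs
  · simp
  have := NeZero.of_pos hs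
  simp only [← Fin.sum_univ_eq_sum_range]
  exact Fintype.sum_equiv (Equiv.addRight (Fin.ofNat s m)) _ _
    fun k => by simp [Fin.val_add]

namespace CyclicChain

variable {s : ℕ} {c : ℝ} {a : ℕ → ℝ}

theorem mul_le_succ_mod (hstep : ∀ n, n + 1 < s → c * a n ≤ a (n + 1))
    (hcyc : c * a (s - 1) ≤ a 0) {i : ℕ} (hi : i < s) : c * a i ≤ a ((i + 1) % s) := by
  rcases (show i + 1 ≤ s by omega).lt_or_eq with h | h
  · rw [Nat.mod_eq_of_lt h]
    exact hstep i h
  · rw [h, Nat.mod_self, show i = s - 1 by omega]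
    exact hcyc

theorem pow_mul_le_add_mod (hc : 0 ≤ c) (hstep : ∀ i < s, c * a i ≤ a ((i + 1) % s))
    (d : ℕ) {i : ℕ} (hi : i < s) : c ^ d * a i ≤ a ((i + d) % s) := by
  induction d with
  | zero => simp [Nat.mod_eq_of_lt hi]
  | succ d ih =>
    calc c ^ (d + 1) * a i = c * (c ^ d * a i) := by ring
      _ ≤ c * a ((i + d) % s) := mul_le_mul_of_nonneg_left ih hc
      _ ≤ a (((i + d) % s + 1) % s) := hstep _ (Nat.mod_lt _ (by omega))
      _ = a ((i + (d + 1)) % s) := by rw [Nat.mod_add_mod, add_assoc]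

theorem le_mul_zpow (hc : 0 < c) (hstep : ∀ i < s, c * a i ≤ a ((i + 1) % s))
    {n k : ℕ} (hn : n < s) (hk : k < s) :
    a ((k + (n + 1)) % s) ≤ a n * c ^ ((k : ℤ) + 1 - s) := by
  have hchain := pow_mul_le_add_mod hc.le hstep (s - 1 - k)
    (Nat.mod_lt (k + (n + 1)) (by omega : 0 < s))
  have hturn : ((k + (n + 1)) % s + (s - 1 - k)) % s = n := by
    rw [Nat.mod_add_mod, show k + (n + 1) + (s - 1 - k) = n + s by omega, Nat.add_mod_right,
      Nat.mod_eq_of_lt hn]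
  rw [hturn] at hchain
  have hexp : (k : ℤ) + 1 - s = -((s - 1 - k : ℕ) : ℤ) := by omega
  rw [hexp, zpow_neg, zpow_natCast, ← div_eq_mul_inv, le_div_iff₀ (pow_pos hc _), mul_comm]
  exact hchain

theorem sum_le_mul_sum_zpow (hc : 0 < c) (hstep : ∀ i < s, c * a i ≤ a ((i + 1) % s))
    {n : ℕ} (hn : n < s) :
    ∑ j ∈ range s, a j ≤ a n * ∑ k ∈ range s, c ^ ((k : ℤ) + 1 - s) := by
  rw [← sum_range_add_mod s (n + 1) a, mul_sum]
  exact sum_le_sum fun k hk => le_mul_zpow hc hstep hn (mem_range.mp hk)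

end CyclicChain

open CyclicChain in
/-- `a n` is the paper's `a_{n+1}`. -/
theorem stmt_13_general (s : ℕ) (δ : ℝ) (hδ1 : δ < 1)
    (a : ℕ → ℝ)
    (hstep : ∀ n, n + 1 < s → (1 - δ) * a n ≤ a (n + 1))
    (hcyc : (1 - δ) * a (s - 1) ≤ a 0) :
    ∀ n < s, (∑ j ∈ Finset.range s, a j) /
        (∑ k ∈ Finset.range s, (1 - δ) ^ (((k : ℤ) + 1) - (s : ℤ))) ≤ a n := by
  intro n hn
  have hc : 0 < 1 - δ := by linarith
  have hden : 0 < ∑ k ∈ range s, (1 - δ) ^ ((k : ℤ) + 1 - s) :=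
    sum_pos (fun k _ => zpow_pos hc _) (nonempty_range_iff.mpr (by omega))
  rw [div_le_iff₀ hden]
  exact sum_le_mul_sum_zpow hc (fun i => mul_le_succ_mod hstep hcyc) hn

/-- Cyclic-loop lower bound on stationary probabilities: if `a 0, …, a (s-1)` are
nonnegative reals with `a (n+1) ≥ (1-δ) * a n` cyclically (including
`a 0 ≥ (1-δ) * a (s-1)`), then each `a n` is at least the total sum divided by
`∑_{k=1}^{s} (1-δ)^(k-s)`. Here `a (n-1)` plays the role of the paper's `a_n`. -/
theorem stmt_13 (s : ℕ) (hs : 1 ≤ s) (δ : ℝ) (hδ0 : 0 ≤ δ) (hδ1 : δ < 1)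
    (a : ℕ → ℝ) (ha : ∀ n < s, 0 ≤ a n)
    (hstep : ∀ n, n + 1 < s → (1 - δ) * a n ≤ a (n + 1))
    (hcyc : (1 - δ) * a (s - 1) ≤ a 0) :
    ∀ n < s, (∑ j ∈ Finset.range s, a j) /
        (∑ k ∈ Finset.range s, (1 - δ) ^ (((k : ℤ) + 1) - (s : ℤ))) ≤ a n :=
  stmt_13_general s δ hδ1 a hstep hcyc
end
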